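/- arXiv:1110.6321 — 8 statements merged into one kernel-verified Lean document; each statement's English description precedes it below -/
import Mathlib

section
/- Let T be an N×N column-stochastic real matrix (all entries nonnegative and every column sums to 1), and let p = (p_1,…,p_N) and q = (q_1,…,q_N) be probability vectors with q_i > 0 for all i. Then the classical relative entropy satisfies H(Tp‖Tq) ≤ H(p‖q), where for probability vectors u, v the relative entropy is H(u‖v) = Σ_i u_i log(u_i/v_i), with the convention that a term is 0 whenever u_i = 0 (note that whenever (Tq)_i = 0 one also has (Tp)_i = 0, so all terms on the left are well-defined under this convention). -/
open Finset

/-- Classical relative entropy `H(u‖v) = Σ_i u_i log(u_i/v_i)`;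
the convention `0 · log(0/x) = 0` holds automatically in Lean. -/
noncomputable def relEnt {ι : Type*} [Fintype ι] (u v : ι → ℝ) : ℝ :=
  ∑ i, u i * Real.log (u i / v i)

/-- A probability vector: nonnegative entries summing to 1. -/
def IsProbVec {ι : Type*} [Fintype ι] (p : ι → ℝ) : Prop :=
  (∀ i, 0 ≤ p i) ∧ ∑ i, p i = 1

/-- A column-stochastic matrix: nonnegative entries, every column sums to 1. -/
def IsColStochastic {ι : Type*} [Fintype ι] (T : Matrix ι ι ℝ) : Prop :=
  (∀ i j, 0 ≤ T i j) ∧ ∀ j, ∑ i, T i j = 1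

/-- Tangent-line bound used in the log-sum inequality. -/
lemma key_tangent {a b c : ℝ} (ha : 0 ≤ a) (hb : 0 ≤ b) (hc : 0 < c)
    (hab : b = 0 → a = 0) :
    a * Real.log c + (a - b * c) ≤ a * Real.log (a / b) := by
  rcases eq_or_lt_of_le ha with h | h
  · simp only [← h, zero_mul, zero_add, zero_sub, zero_mul]
    nlinarith
  · have hb' : 0 < b := by
      rcases eq_or_lt_of_le hb with h' | h'
      · exact absurd (hab h'.symm) (by positivity)
      · exact h'
    have hx : 0 < (b * c) / a := by positivity
    have hlog := Real.log_le_sub_one_of_pos hx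
    have hlogeq : Real.log ((b * c) / a) = Real.log b + Real.log c - Real.log a := by
      rw [Real.log_div (by positivity) h.ne', Real.log_mul hb'.ne' hc.ne']
    have hdiv : Real.log (a / b) = Real.log a - Real.log b :=
      Real.log_div h.ne' hb'.ne'
    rw [hdiv]
    have h2 : (b * c) / a - 1 = (b * c - a) / a := by field_simp
    rw [hlogeq, h2] at hlog
    have h3 : Real.log b + Real.log c - Real.log a ≤ (b * c - a) / a := hlog
    have h4 : a * (Real.log b + Real.log c - Real.log a) ≤ b * c - a := by
      have := mul_le_mul_of_nonneg_left h3 ha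
      rwa [mul_div_cancel₀ _ h.ne'] at this
    nlinarith

/-- Monotonicity of relative entropy under column-stochastic matrices:
`H(Tp‖Tq) ≤ H(p‖q)`. -/
theorem relEnt_mulVec_le {N : ℕ} (T : Matrix (Fin N) (Fin N) ℝ)
    (p q : Fin N → ℝ) (hT : IsColStochastic T)
    (hp : IsProbVec p) (hq : IsProbVec q) (hqpos : ∀ i, 0 < q i) :
    relEnt (T.mulVec p) (T.mulVec q) ≤ relEnt p q := by
  obtain ⟨hT0, hTcol⟩ := hT
  obtain ⟨hp0, hp1⟩ := hp
  have hmvp : ∀ i, T.mulVec p i = ∑ j, T i j * p j := fun i => by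
    simp [Matrix.mulVec, dotProduct]
  have hmvq : ∀ i, T.mulVec q i = ∑ j, T i j * q j := fun i => by
    simp [Matrix.mulVec, dotProduct]
  have key1 : ∀ i, T.mulVec p i * Real.log (T.mulVec p i / T.mulVec q i)
      ≤ ∑ j, T i j * p j * Real.log (p j / q j) := by
    intro i
    set A := ∑ j, T i j * p j with hA
    set B := ∑ j, T i j * q j with hB
    rw [hmvp, hmvq, ← hA, ← hB]
    have hAnn : 0 ≤ A := Finset.sum_nonneg fun j _ =>
      mul_nonneg (hT0 i j) (hp0 j)
    have hBnn : 0 ≤ B := Finset.sum_nonneg fun j _ =>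
      mul_nonneg (hT0 i j) (hqpos j).le
    rcases eq_or_lt_of_le hBnn with hB0 | hBpos
    · -- B = 0 forces T i j = 0 for all j, hence A = 0
      have hTz : ∀ j, T i j = 0 := by
        intro j
        have := (Finset.sum_eq_zero_iff_of_nonneg
          (fun j _ => mul_nonneg (hT0 i j) (hqpos j).le)).mp hB0.symm j (Finset.mem_univ j)
        exact (mul_eq_zero.mp this).resolve_right (hqpos j).ne'
      have hA0 : A = 0 := by
        rw [hA]; exact Finset.sum_eq_zero fun j _ => by rw [hTz j, zero_mul]
      rw [hA0, zero_mul]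
      exact Finset.sum_nonneg fun j _ => by rw [hTz j, zero_mul, zero_mul]
    · rcases eq_or_lt_of_le hAnn with hA0 | hApos
      · -- A = 0 forces all T i j * p j = 0
        have hz : ∀ j, T i j * p j = 0 := by
          intro j
          exact (Finset.sum_eq_zero_iff_of_nonneg
            (fun j _ => mul_nonneg (hT0 i j) (hp0 j))).mp hA0.symm j (Finset.mem_univ j)
        rw [← hA0, zero_mul]
        exact Finset.sum_nonneg fun j _ => by rw [hz j, zero_mul]
      · set c := A / B with hc
        have hcpos : 0 < c := div_pos hApos hBpos
        have hterm : ∀ j, T i j * p j * Real.log c + (T i j * p j - T i j * q j * c)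
            ≤ T i j * p j * Real.log (p j / q j) := by
          intro j
          have hkey := key_tangent (a := T i j * p j) (b := T i j * q j) (c := c)
            (mul_nonneg (hT0 i j) (hp0 j)) (mul_nonneg (hT0 i j) (hqpos j).le) hcpos
            (fun h => by
              have hT' : T i j = 0 :=
                (mul_eq_zero.mp h).resolve_right (hqpos j).ne'
              rw [hT', zero_mul])
          rcases eq_or_ne (T i j) 0 with hT' | hT'
          · simpa [hT'] using hkey
          · have : (T i j * p j) / (T i j * q j) = p j / q j :=
              mul_div_mul_left _ _ hT'
            rwa [this] at hkey
        calc A * Real.log (A / B)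
            = A * Real.log c + (A - B * c) := by
              rw [hc, mul_div_cancel₀ _ hBpos.ne']; ring
          _ = ∑ j, (T i j * p j * Real.log c + (T i j * p j - T i j * q j * c)) := by
              rw [Finset.sum_add_distrib, ← Finset.sum_mul, ← hA,
                Finset.sum_sub_distrib, ← hA, ← Finset.sum_mul, ← hB]
          _ ≤ ∑ j, T i j * p j * Real.log (p j / q j) :=
              Finset.sum_le_sum fun j _ => hterm j
  calc relEnt (T.mulVec p) (T.mulVec q)
      ≤ ∑ i, ∑ j, T i j * p j * Real.log (p j / q j) :=
        Finset.sum_le_sum fun i _ => key1 i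
    _ = ∑ j, (∑ i, T i j) * (p j * Real.log (p j / q j)) := by
        rw [Finset.sum_comm]
        exact Finset.sum_congr rfl fun j _ => by
          rw [Finset.sum_mul]; exact Finset.sum_congr rfl fun i _ => by ring
    _ = relEnt p q := by
        simp only [hTcol, one_mul, relEnt]
end

section
/- Let K be a positive integer and for each k ∈ {1,…,K} let m_k, n_k be positive integers; index coordinates by the sigma type of pairs (k, (s,t)) with s ∈ Fin m_k, t ∈ Fin n_k (so the total dimension is N = Σ_k m_k n_k). Suppose: (μ_k)_k and (ν_k)_k are probability vectors on {1,…,K}; for each k, P_k and Q_k are probability vectors of dimension m_k and r_k is a probability vector of dimension n_k; p is defined by p(k,(s,t)) = μ_k · P_k(s) · r_k(t) and q by q(k,(s,t)) = ν_k · Q_k(s) · r_k(t); T is the block-diagonal matrix whose k-th diagonal block is the Kronecker product π_k ⊗ T_k, where π_k is an m_k×m_k permutation matrix and T_k is an n_k×n_k column-stochastic matrix. If all components of p and of q are strictly positive, then H(Tp‖Tq) = H(p‖q). -/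
open Finset

/-- A permutation matrix: a 0-1 matrix with all row and column sums equal to 1. -/
def IsPermMatrix {ι : Type*} [Fintype ι] (π : Matrix ι ι ℝ) : Prop :=
  (∀ i j, π i j = 0 ∨ π i j = 1) ∧ (∀ i, ∑ j, π i j = 1) ∧ (∀ j, ∑ i, π i j = 1)

lemma pos3 {a b c : ℝ} (ha : 0 ≤ a) (hb : 0 ≤ b) (hc : 0 ≤ c) (h : 0 < a*b*c) :
    0 < a ∧ 0 < b ∧ 0 < c := by
  refine ⟨?_, ?_, ?_⟩ <;> nlinarith [mul_nonneg hb hc, mul_nonneg ha hc, mul_nonneg ha hb]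

lemma cancel_log {a b c : ℝ} (hc : 0 ≤ c) :
    (a*c) * Real.log ((a*c)/(b*c)) = c * (a * Real.log (a/b)) := by
  rcases hc.eq_or_lt with h | h
  · simp [← h]
  · rw [mul_div_mul_right _ _ h.ne']; ring

lemma perm_exists {M : ℕ} {π : Matrix (Fin M) (Fin M) ℝ} (h : IsPermMatrix π) :
    ∃ σ : Equiv.Perm (Fin M), ∀ (f : Fin M → ℝ) s, π.mulVec f s = f (σ s) := by
  obtain ⟨h01, hrow, hcol⟩ := h
  have hnn : ∀ i j, 0 ≤ π i j := fun i j => by rcases h01 i j with h | h <;> simp [h]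
  have hex : ∀ s, ∃ s', π s s' = 1 := by
    intro s
    by_contra hc
    push_neg at hc
    have : ∑ j, π s j = 0 := Finset.sum_eq_zero fun j _ => by
      rcases h01 s j with h | h
      · exact h
      · exact absurd h (hc j)
    rw [hrow s] at this; norm_num at this
  choose g hg using hex
  have huniq : ∀ s j, π s j = 1 → j = g s := by
    intro s j hj
    by_contra hne
    have h2 : (2:ℝ) ≤ ∑ j', π s j' := by
      calc (2:ℝ) = ∑ j' ∈ ({j, g s} : Finset (Fin M)), π s j' := by
            rw [Finset.sum_pair hne, hj, hg s]; norm_num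
        _ ≤ ∑ j', π s j' :=
            Finset.sum_le_sum_of_subset_of_nonneg (Finset.subset_univ _)
              (fun i _ _ => hnn s i)
    rw [hrow s] at h2; norm_num at h2
  have ginj : Function.Injective g := by
    intro s1 s2 hgs
    by_contra hne
    have h2 : (2:ℝ) ≤ ∑ i, π i (g s1) := by
      calc (2:ℝ) = ∑ i ∈ ({s1, s2} : Finset (Fin M)), π i (g s1) := by
            rw [Finset.sum_pair hne, hg s1]
            have := hg s2; rw [← hgs] at this; rw [this]; norm_num
        _ ≤ ∑ i, π i (g s1) :=
            Finset.sum_le_sum_of_subset_of_nonneg (Finset.subset_univ _)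
              (fun i _ _ => hnn i _)
    rw [hcol (g s1)] at h2; norm_num at h2
  refine ⟨Equiv.ofBijective g ((Finite.injective_iff_bijective).mp ginj), ?_⟩
  intro f s
  show ∑ j, π s j * f j = f (g s)
  rw [Finset.sum_eq_single (g s)]
  · rw [hg s, one_mul]
  · intro j _ hj
    rcases h01 s j with h | h
    · rw [h, zero_mul]
    · exact absurd (huniq s j h) hj
  · intro h; exact absurd (Finset.mem_univ _) h

/-- Saturation of monotonicity of relative entropy for vectors/matrices of the
product-decomposed form: if `p(k,(s,t)) = μ_k P_k(s) r_k(t)`,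
`q(k,(s,t)) = ν_k Q_k(s) r_k(t)` are strictly positive, and
`T = ⊕_k (π_k ⊗ T_k)` with `π_k` permutation matrices and `T_k`
column-stochastic, then `H(Tp‖Tq) = H(p‖q)`. -/
theorem relEnt_mulVec_eq_of_block_structure
    {K : ℕ} (hK : 0 < K) (m n : Fin K → ℕ)
    (hm : ∀ k, 0 < m k) (hn : ∀ k, 0 < n k)
    (μ ν : Fin K → ℝ) (hμ : IsProbVec μ) (hν : IsProbVec ν)
    (P Q : ∀ k, Fin (m k) → ℝ) (hP : ∀ k, IsProbVec (P k)) (hQ : ∀ k, IsProbVec (Q k))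
    (r : ∀ k, Fin (n k) → ℝ) (hr : ∀ k, IsProbVec (r k))
    (π : ∀ k, Matrix (Fin (m k)) (Fin (m k)) ℝ) (hπ : ∀ k, IsPermMatrix (π k))
    (Tk : ∀ k, Matrix (Fin (n k)) (Fin (n k)) ℝ) (hTk : ∀ k, IsColStochastic (Tk k))
    (p q : (Σ k : Fin K, Fin (m k) × Fin (n k)) → ℝ)
    (hpdef : ∀ k s t, p ⟨k, (s, t)⟩ = μ k * P k s * r k t)
    (hqdef : ∀ k s t, q ⟨k, (s, t)⟩ = ν k * Q k s * r k t)
    (T : Matrix (Σ k : Fin K, Fin (m k) × Fin (n k))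
                (Σ k : Fin K, Fin (m k) × Fin (n k)) ℝ)
    (hTdiag : ∀ k (s s' : Fin (m k)) (t t' : Fin (n k)),
      T ⟨k, (s, t)⟩ ⟨k, (s', t')⟩ = π k s s' * Tk k t t')
    (hToff : ∀ x y : (Σ k : Fin K, Fin (m k) × Fin (n k)), x.1 ≠ y.1 → T x y = 0)
    (hppos : ∀ x, 0 < p x) (hqpos : ∀ x, 0 < q x) :
    relEnt (T.mulVec p) (T.mulVec q) = relEnt p q := by
  classical
  -- permutations underlying the π k
  choose σ hσ using fun k => perm_exists (hπ k)
  -- positivity of all factors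
  have hfac : ∀ k s t, 0 < μ k ∧ 0 < P k s ∧ 0 < r k t := by
    intro k s t
    have := hppos ⟨k, (s, t)⟩
    rw [hpdef] at this
    exact pos3 (hμ.1 k) ((hP k).1 s) ((hr k).1 t) this
  have hfacq : ∀ (k : Fin K) (s : Fin (m k)) (_ : Fin (n k)), 0 < ν k ∧ 0 < Q k s := by
    intro k s t
    have := hqpos ⟨k, (s, t)⟩
    rw [hqdef] at this
    have := pos3 (hν.1 k) ((hQ k).1 s) ((hr k).1 t) this
    exact ⟨this.1, this.2.1⟩
  have hμpos : ∀ k, 0 < μ k := fun k => (hfac k ⟨0, hm k⟩ ⟨0, hn k⟩).1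
  have hPpos : ∀ k s, 0 < P k s := fun k s => (hfac k s ⟨0, hn k⟩).2.1
  have hrpos : ∀ k t, 0 < r k t := fun k t => (hfac k ⟨0, hm k⟩ t).2.2
  have hνpos : ∀ k, 0 < ν k := fun k => (hfacq k ⟨0, hm k⟩ ⟨0, hn k⟩).1
  have hQpos : ∀ k s, 0 < Q k s := fun k s => (hfacq k s ⟨0, hn k⟩).2
  -- properties of R k := (Tk k).mulVec (r k)
  have hRnn : ∀ k t, 0 ≤ (Tk k).mulVec (r k) t := by
    intro k t
    show (0:ℝ) ≤ ∑ t', Tk k t t' * r k t'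
    exact Finset.sum_nonneg fun t' _ => mul_nonneg ((hTk k).1 t t') ((hr k).1 t')
  have hRsum : ∀ k, ∑ t, (Tk k).mulVec (r k) t = 1 := by
    intro k
    calc ∑ t, (Tk k).mulVec (r k) t = ∑ t, ∑ t', Tk k t t' * r k t' := rfl
      _ = ∑ t', (∑ t, Tk k t t') * r k t' := by
          rw [Finset.sum_comm]
          exact Finset.sum_congr rfl fun t' _ => (Finset.sum_mul _ _ _).symm
      _ = ∑ t', r k t' := Finset.sum_congr rfl fun t' _ => by rw [(hTk k).2 t', one_mul]
      _ = 1 := (hr k).2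
  -- key computation of T.mulVec
  have hkeyP : ∀ k s t, T.mulVec p ⟨k, (s, t)⟩
      = μ k * P k (σ k s) * (Tk k).mulVec (r k) t := by
    intro k s t
    show ∑ y, T ⟨k, (s, t)⟩ y * p y = _
    rw [← Finset.univ_sigma_univ, Finset.sum_sigma]
    rw [Finset.sum_eq_single k]
    · rw [Fintype.sum_prod_type]
      have : ∀ s' t', T ⟨k,(s,t)⟩ ⟨k,(s',t')⟩ * p ⟨k,(s',t')⟩
          = μ k * ((π k s s' * P k s') * (Tk k t t' * r k t')) := by
        intro s' t'; rw [hTdiag, hpdef]; ring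
      simp only [this]
      have hs : P k ((σ k) s) = ∑ s', π k s s' * P k s' := by
        rw [← hσ k (P k) s]; rfl
      have ht : (Tk k).mulVec (r k) t = ∑ t', Tk k t t' * r k t' := rfl
      rw [mul_assoc, hs, ht, Finset.sum_mul_sum, Finset.mul_sum]
      refine Finset.sum_congr rfl fun s' _ => ?_
      rw [Finset.mul_sum]

    · intro k' _ hk'
      apply Finset.sum_eq_zero
      intro y _
      rw [hToff ⟨k,(s,t)⟩ ⟨k', y⟩ (by simpa using (Ne.symm hk')), zero_mul]
    · intro h; exact absurd (Finset.mem_univ _) h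
  have hkeyQ : ∀ k s t, T.mulVec q ⟨k, (s, t)⟩
      = ν k * Q k (σ k s) * (Tk k).mulVec (r k) t := by
    intro k s t
    show ∑ y, T ⟨k, (s, t)⟩ y * q y = _
    rw [← Finset.univ_sigma_univ, Finset.sum_sigma]
    rw [Finset.sum_eq_single k]
    · rw [Fintype.sum_prod_type]
      have : ∀ s' t', T ⟨k,(s,t)⟩ ⟨k,(s',t')⟩ * q ⟨k,(s',t')⟩
          = ν k * ((π k s s' * Q k s') * (Tk k t t' * r k t')) := by
        intro s' t'; rw [hTdiag, hqdef]; ring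
      simp only [this]
      have hs : Q k ((σ k) s) = ∑ s', π k s s' * Q k s' := by
        rw [← hσ k (Q k) s]; rfl
      have ht : (Tk k).mulVec (r k) t = ∑ t', Tk k t t' * r k t' := rfl
      rw [mul_assoc, hs, ht, Finset.sum_mul_sum, Finset.mul_sum]
      refine Finset.sum_congr rfl fun s' _ => ?_
      rw [Finset.mul_sum]

    · intro k' _ hk'
      apply Finset.sum_eq_zero
      intro y _
      rw [hToff ⟨k,(s,t)⟩ ⟨k', y⟩ (by simpa using (Ne.symm hk')), zero_mul]
    · intro h; exact absurd (Finset.mem_univ _) h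
  -- now compute both relative entropies
  have lhs_eq : relEnt (T.mulVec p) (T.mulVec q)
      = ∑ k, ∑ s, μ k * P k s * Real.log ((μ k * P k s) / (ν k * Q k s)) := by
    unfold relEnt
    rw [← Finset.univ_sigma_univ, Finset.sum_sigma]
    refine Finset.sum_congr rfl fun k _ => ?_
    rw [Fintype.sum_prod_type]
    have step : ∀ s, ∑ t, T.mulVec p ⟨k,(s,t)⟩
        * Real.log (T.mulVec p ⟨k,(s,t)⟩ / T.mulVec q ⟨k,(s,t)⟩)
        = μ k * P k (σ k s) * Real.log ((μ k * P k (σ k s)) / (ν k * Q k (σ k s))) := by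
      intro s
      have : ∀ t, T.mulVec p ⟨k,(s,t)⟩
          * Real.log (T.mulVec p ⟨k,(s,t)⟩ / T.mulVec q ⟨k,(s,t)⟩)
          = (Tk k).mulVec (r k) t *
            (μ k * P k (σ k s) * Real.log ((μ k * P k (σ k s)) / (ν k * Q k (σ k s)))) := by
        intro t
        rw [hkeyP, hkeyQ]
        exact cancel_log (hRnn k t)
      simp only [this]
      rw [← Finset.sum_mul, hRsum k, one_mul]
    simp only [step]
    exact Equiv.sum_comp (σ k)
      (fun s => μ k * P k s * Real.log ((μ k * P k s) / (ν k * Q k s)))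
  have rhs_eq : relEnt p q
      = ∑ k, ∑ s, μ k * P k s * Real.log ((μ k * P k s) / (ν k * Q k s)) := by
    unfold relEnt
    rw [← Finset.univ_sigma_univ, Finset.sum_sigma]
    refine Finset.sum_congr rfl fun k _ => ?_
    rw [Fintype.sum_prod_type]
    refine Finset.sum_congr rfl fun s _ => ?_
    have : ∀ t, p ⟨k,(s,t)⟩ * Real.log (p ⟨k,(s,t)⟩ / q ⟨k,(s,t)⟩)
        = r k t * (μ k * P k s * Real.log ((μ k * P k s) / (ν k * Q k s))) := by
      intro t
      rw [hpdef, hqdef]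
      exact cancel_log ((hr k).1 t)
    simp only [this]
    rw [← Finset.sum_mul, (hr k).2, one_mul]
  rw [lhs_eq, rhs_eq]
end

section
/- Let T, A, B be N×N column-stochastic real matrices such that every entry of B is strictly positive, and let p be an N-dimensional probability vector. Then H_p(TA‖TB) ≤ H_p(A‖B), where for column-stochastic matrices X, Y with columns x_ν, y_ν, the weighted relative entropy is H_p(X‖Y) = Σ_ν p_ν H(x_ν‖y_ν) and H(u‖v) = Σ_i u_i log(u_i/v_i) with the convention that a term is 0 whenever u_i = 0. -/
open Finset

/-- Shannon entropy `H(u) = -Σ_i u_i log u_i` (with `0 · log 0 = 0`). -/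
noncomputable def shEnt {ι : Type*} [Fintype ι] (u : ι → ℝ) : ℝ :=
  -∑ i, u i * Real.log (u i)

/-- Weighted relative entropy `H_p(A‖B) = Σ_ν p_ν H(a_ν‖b_ν)` over the columns. -/
noncomputable def wRelEnt {ι : Type*} [Fintype ι] (p : ι → ℝ) (A B : Matrix ι ι ℝ) : ℝ :=
  ∑ ν, p ν * relEnt (fun i => A i ν) (fun i => B i ν)

/-- Weighted entropy `H_p(T) = Σ_ν p_ν H(t_ν)` over the columns. -/
noncomputable def wEnt {ι : Type*} [Fintype ι] (p : ι → ℝ) (T : Matrix ι ι ℝ) : ℝ :=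
  ∑ ν, p ν * shEnt (fun i => T i ν)


lemma klTerm {a b : ℝ} (ha : 0 ≤ a) (hb : 0 ≤ b) (h : b = 0 → a = 0) :
    a - b ≤ a * Real.log (a / b) := by
  rcases eq_or_lt_of_le ha with h0 | ha'
  · rcases eq_or_lt_of_le hb with hb0 | hb'
    · simp [← h0, ← hb0]
    · simp only [← h0, zero_mul, zero_sub]; linarith
  · have hb' : 0 < b := lt_of_le_of_ne hb fun e => by simp [h e.symm] at ha'
    have h1 := Real.log_le_sub_one_of_pos (div_pos hb' ha')
    have hlog : Real.log (b / a) = - Real.log (a / b) := by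
      rw [← Real.log_inv, inv_div]
    rw [hlog] at h1
    have h2 : a * (-Real.log (a / b)) ≤ a * (b / a - 1) :=
      mul_le_mul_of_nonneg_left h1 ha
    have h3 : a * (b / a - 1) = b - a := by field_simp
    nlinarith

lemma logsum {ι : Type*} [Fintype ι] (a b : ι → ℝ) (ha : ∀ j, 0 ≤ a j)
    (hb : ∀ j, 0 ≤ b j) (h : ∀ j, b j = 0 → a j = 0) :
    (∑ j, a j) * Real.log ((∑ j, a j) / (∑ j, b j)) ≤ ∑ j, a j * Real.log (a j / b j) := by
  set s := ∑ j, a j with hs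
  set t := ∑ j, b j with ht
  have hs0 : 0 ≤ s := Finset.sum_nonneg fun j _ => ha j
  have ht0 : 0 ≤ t := Finset.sum_nonneg fun j _ => hb j
  rcases eq_or_lt_of_le ht0 with ht0' | htpos
  · -- t = 0 → all b j = 0 → all a j = 0
    have hbz : ∀ j ∈ Finset.univ, b j = 0 :=
      (Finset.sum_eq_zero_iff_of_nonneg fun j _ => hb j).mp ht0'.symm
    have haz : ∀ j, a j = 0 := fun j => h j (hbz j (Finset.mem_univ j))
    have : s = 0 := by rw [hs]; exact Finset.sum_eq_zero fun j _ => haz j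
    simp [this, haz]
  · rcases eq_or_lt_of_le hs0 with hs0' | hspos
    · have haz : ∀ j ∈ Finset.univ, a j = 0 :=
        (Finset.sum_eq_zero_iff_of_nonneg fun j _ => ha j).mp hs0'.symm
      rw [← hs0']
      rw [zero_mul]
      exact Finset.sum_nonneg fun j _ => by rw [haz j (Finset.mem_univ j)]; simp
    · -- main case
      have key : ∀ j, a j - b j * (s / t) ≤ a j * Real.log (a j / b j) - a j * Real.log (s / t) := by
        intro j
        rcases eq_or_lt_of_le (ha j) with h0 | haj
        · simp only [← h0, zero_mul, zero_sub, sub_zero]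
          have : 0 ≤ b j * (s / t) := mul_nonneg (hb j) (div_nonneg hs0 ht0)
          linarith
        · have hbj : 0 < b j := lt_of_le_of_ne (hb j) fun e => by simp [h j e.symm] at haj
          have := klTerm (le_of_lt haj) (le_of_lt (mul_pos hbj (div_pos hspos htpos)))
            (fun e => absurd e (ne_of_gt (mul_pos hbj (div_pos hspos htpos))))
          have heq : a j * Real.log (a j / (b j * (s / t)))
              = a j * Real.log (a j / b j) - a j * Real.log (s / t) := by
            rw [div_mul_eq_div_div, Real.log_div (by positivity) (by positivity), mul_sub]
          linarith [this, heq ▸ this]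
      calc s * Real.log (s / t) = ∑ j, a j * Real.log (s / t) := by
            rw [← Finset.sum_mul]
        _ ≤ ∑ j, a j * Real.log (a j / b j) := by
            have h2 : ∑ j, a j - ∑ j, b j * (s / t)
                ≤ ∑ j, a j * Real.log (a j / b j) - ∑ j, a j * Real.log (s / t) := by
              rw [← Finset.sum_sub_distrib, ← Finset.sum_sub_distrib]
              exact Finset.sum_le_sum (fun j _ => key j)
            have hbsum : ∑ j, b j * (s / t) = s := by
              rw [← Finset.sum_mul, ← ht]
              field_simp
            rw [hbsum, ← hs, sub_self] at h2
            linarith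

lemma relEnt_apply_le {ι : Type*} [Fintype ι] (T : Matrix ι ι ℝ)
    (hT : IsColStochastic T) (u v : ι → ℝ) (hu : ∀ j, 0 ≤ u j) (hv : ∀ j, 0 < v j) :
    relEnt (fun i => ∑ j, T i j * u j) (fun i => ∑ j, T i j * v j) ≤ relEnt u v := by
  unfold relEnt
  calc ∑ i, (∑ j, T i j * u j) * Real.log ((∑ j, T i j * u j) / (∑ j, T i j * v j))
      ≤ ∑ i, ∑ j, (T i j * u j) * Real.log ((T i j * u j) / (T i j * v j)) := by
        refine Finset.sum_le_sum fun i _ => ?_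
        refine logsum _ _ (fun j => mul_nonneg (hT.1 i j) (hu j))
          (fun j => mul_nonneg (hT.1 i j) (hv j).le) (fun j hj => ?_)
        have : T i j = 0 := by
          rcases mul_eq_zero.mp hj with h | h
          · exact h
          · exact absurd h (ne_of_gt (hv j))
        rw [this, zero_mul]
    _ = ∑ j, u j * Real.log (u j / v j) := by
        rw [Finset.sum_comm]
        refine Finset.sum_congr rfl fun j _ => ?_
        have : ∀ i, (T i j * u j) * Real.log ((T i j * u j) / (T i j * v j))
            = T i j * (u j * Real.log (u j / v j)) := by
          intro i
          rcases eq_or_lt_of_le (hT.1 i j) with h0 | hTij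
          · simp [← h0]
          · rw [mul_div_mul_left _ _ (ne_of_gt hTij)]; ring
        rw [Finset.sum_congr rfl fun i _ => this i, ← Finset.sum_mul, hT.2 j, one_mul]

/-- Monotonicity of the weighted relative entropy of stochastic matrices:
`H_p(TA‖TB) ≤ H_p(A‖B)`. -/
theorem wRelEnt_mul_le {N : ℕ} (T A B : Matrix (Fin N) (Fin N) ℝ)
    (hT : IsColStochastic T) (hA : IsColStochastic A) (hB : IsColStochastic B)
    (hBpos : ∀ i j, 0 < B i j) (p : Fin N → ℝ) (hp : IsProbVec p) :
    wRelEnt p (T * A) (T * B) ≤ wRelEnt p A B := by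
  unfold wRelEnt
  refine Finset.sum_le_sum fun ν _ => mul_le_mul_of_nonneg_left ?_ (hp.1 ν)
  have hmul : ∀ i, (T * A) i ν = ∑ j, T i j * A j ν := fun i => Matrix.mul_apply
  have hmul' : ∀ i, (T * B) i ν = ∑ j, T i j * B j ν := fun i => Matrix.mul_apply
  calc relEnt (fun i => (T * A) i ν) (fun i => (T * B) i ν)
      = relEnt (fun i => ∑ j, T i j * A j ν) (fun i => ∑ j, T i j * B j ν) := by
        simp only [hmul, hmul']
    _ ≤ relEnt (fun i => A i ν) (fun i => B i ν) :=
        relEnt_apply_le T hT _ _ (fun j => hA.1 j ν) (fun j => hBpos j ν)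
end

section
/- Let {B^(i)}_{i∈I} be a finite family of N×N column-stochastic matrices, each with all entries strictly positive, let (λ_i)_{i∈I} be a probability vector, let p be an N-dimensional probability vector, and let T be an N×N column-stochastic matrix such that every entry of T·(Σ_i λ_i B^(i)) is strictly positive. Then χ_p({λ_i, T B^(i)}) ≤ χ_p({λ_i, B^(i)}). -/
open Finset

/-- The log-sum inequality. -/
lemma log_sum_ineq {ι : Type*} [Fintype ι] (a b : ι → ℝ)
    (ha : ∀ i, 0 ≤ a i) (hb : ∀ i, 0 ≤ b i) (hab : ∀ i, b i = 0 → a i = 0)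
    (hbpos : 0 < ∑ i, b i) :
    (∑ i, a i) * Real.log ((∑ i, a i) / (∑ i, b i)) ≤ ∑ i, a i * Real.log (a i / b i) := by
  set S := ∑ i, b i with hS
  have key := Real.convexOn_mul_log.map_sum_le (t := Finset.univ)
      (w := fun i => b i / S) (p := fun i => a i / b i)
      (fun i _ => div_nonneg (hb i) hbpos.le)
      (by rw [← Finset.sum_div]; exact div_self hbpos.ne')
      (fun i _ => Set.mem_Ici.2 (div_nonneg (ha i) (hb i)))
  simp only [smul_eq_mul] at key
  have e1 : ∑ i, (b i / S) * (a i / b i) = (∑ i, a i) / S := by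
    rw [Finset.sum_div]
    refine Finset.sum_congr rfl fun i _ => ?_
    rcases eq_or_lt_of_le (hb i) with h | h
    · simp [← h, hab i h.symm]
    · field_simp
  have e2 : ∑ i, (b i / S) * ((a i / b i) * Real.log (a i / b i)) =
      (∑ i, a i * Real.log (a i / b i)) / S := by
    rw [Finset.sum_div]
    refine Finset.sum_congr rfl fun i _ => ?_
    rcases eq_or_lt_of_le (hb i) with h | h
    · simp [← h, hab i h.symm]
    · field_simp
  rw [e1, e2] at key
  have key2 : ((∑ i, a i) * Real.log ((∑ i, a i) / S)) / S ≤
      (∑ i, a i * Real.log (a i / b i)) / S := by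
    rw [div_mul_eq_mul_div] at key
    linarith
  exact (div_le_div_iff_of_pos_right hbpos).mp key2

/-- Data processing inequality for relative entropy under a column-stochastic matrix. -/
lemma relEnt_matrix_le {N : ℕ} (T : Matrix (Fin N) (Fin N) ℝ) (hT : IsColStochastic T)
    (u v : Fin N → ℝ) (hu : ∀ ν, 0 ≤ u ν) (hv : ∀ ν, 0 < v ν)
    (hTv : ∀ μ, 0 < ∑ ν, T μ ν * v ν) :
    relEnt (fun μ => ∑ ν, T μ ν * u ν) (fun μ => ∑ ν, T μ ν * v ν) ≤ relEnt u v := by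
  unfold relEnt
  calc ∑ μ, (∑ ν, T μ ν * u ν) * Real.log ((∑ ν, T μ ν * u ν) / (∑ ν, T μ ν * v ν))
      ≤ ∑ μ, ∑ ν, (T μ ν * u ν) * Real.log ((T μ ν * u ν) / (T μ ν * v ν)) := by
        refine Finset.sum_le_sum fun μ _ => ?_
        refine log_sum_ineq _ _ (fun ν => mul_nonneg (hT.1 μ ν) (hu ν))
          (fun ν => mul_nonneg (hT.1 μ ν) (hv ν).le) (fun ν h => ?_) (hTv μ)
        rcases mul_eq_zero.mp h with h | h
        · rw [h, zero_mul]
        · exact absurd h (hv ν).ne'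
    _ = ∑ ν, ∑ μ, (T μ ν * u ν) * Real.log ((T μ ν * u ν) / (T μ ν * v ν)) :=
        Finset.sum_comm
    _ = ∑ ν, (∑ μ, T μ ν) * (u ν * Real.log (u ν / v ν)) := by
        refine Finset.sum_congr rfl fun ν _ => ?_
        rw [Finset.sum_mul]
        refine Finset.sum_congr rfl fun μ _ => ?_
        rcases eq_or_lt_of_le (hT.1 μ ν) with h | h
        · simp [← h]
        · rw [mul_div_mul_left _ _ h.ne']
          ring
    _ = ∑ ν, u ν * Real.log (u ν / v ν) := by
        refine Finset.sum_congr rfl fun ν _ => ?_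
        rw [hT.2 ν, one_mul]

/-- Monotonicity of the χ-quantity under a column-stochastic matrix `T`:
`χ_p({λ_i, T B⁽ⁱ⁾}) ≤ χ_p({λ_i, B⁽ⁱ⁾})`. -/
theorem chi_mul_le {N : ℕ} {I : Type*} [Fintype I]
    (B : I → Matrix (Fin N) (Fin N) ℝ) (hB : ∀ i, IsColStochastic (B i))
    (hBpos : ∀ i, ∀ μ ν, 0 < B i μ ν)
    (l : I → ℝ) (hl : IsProbVec l) (p : Fin N → ℝ) (hp : IsProbVec p)
    (T : Matrix (Fin N) (Fin N) ℝ) (hT : IsColStochastic T)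
    (hTBpos : ∀ μ ν, 0 < (T * ∑ i, l i • B i) μ ν) :
    ∑ i, l i * wRelEnt p (T * B i) (∑ j, l j • (T * B j)) ≤
      ∑ i, l i * wRelEnt p (B i) (∑ j, l j • B j) := by
  set M : Matrix (Fin N) (Fin N) ℝ := ∑ j, l j • B j with hMdef
  have hMapp : ∀ μ ν, M μ ν = ∑ j, l j * B j μ ν := by
    intro μ ν
    simp [hMdef, Matrix.sum_apply]
  have hMpos : ∀ μ ν, 0 < M μ ν := by
    intro μ ν
    obtain ⟨i0, hi0⟩ : ∃ i, 0 < l i := by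
      by_contra h
      push_neg at h
      have : ∑ i, l i = 0 :=
        Finset.sum_eq_zero fun i _ => le_antisymm (h i) (hl.1 i)
      rw [hl.2] at this
      norm_num at this
    rw [hMapp]
    refine Finset.sum_pos' (fun i _ => mul_nonneg (hl.1 i) (hBpos i μ ν).le)
      ⟨i0, Finset.mem_univ i0, mul_pos hi0 (hBpos i0 μ ν)⟩
  have hsum : ∑ j, l j • (T * B j) = T * M := by
    rw [hMdef, Matrix.mul_sum]
    simp_rw [Matrix.mul_smul]
  rw [hsum]
  refine Finset.sum_le_sum fun i _ => mul_le_mul_of_nonneg_left ?_ (hl.1 i)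
  unfold wRelEnt
  refine Finset.sum_le_sum fun ν _ => mul_le_mul_of_nonneg_left ?_ (hp.1 ν)
  have h1 : (fun μ => (T * B i) μ ν) = fun μ => ∑ κ, T μ κ * B i κ ν := by
    funext μ; rw [Matrix.mul_apply]
  have h2 : (fun μ => (T * M) μ ν) = fun μ => ∑ κ, T μ κ * M κ ν := by
    funext μ; rw [Matrix.mul_apply]
  rw [h1, h2]
  refine relEnt_matrix_le T hT _ _ (fun κ => (hBpos i κ ν).le) (fun κ => hMpos κ ν)
    (fun μ => ?_)
  have := hTBpos μ ν
  rwa [Matrix.mul_apply] at this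
end

section
/- Let T be an N×N bi-stochastic real matrix (nonnegative entries, every row and every column sums to 1), let A be an N×N column-stochastic matrix, and let p be an N-dimensional probability vector all of whose components are strictly positive. Then H_p(TA) = H_p(A) if and only if Tᵀ T A = A, where Tᵀ is the transpose of T. -/
open Finset

/-- A bi-stochastic matrix: column-stochastic with all row sums also 1. -/
def IsBiStochastic {ι : Type*} [Fintype ι] (T : Matrix ι ι ℝ) : Prop :=
  IsColStochastic T ∧ ∀ i, ∑ j, T i j = 1

/-- pointwise Gibbs: `u - v ≤ u log(u/v)`. -/
lemma gibbs_pt {u v : ℝ} (hu : 0 ≤ u) (hv : 0 ≤ v) (hac : v = 0 → u = 0) :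
    u - v ≤ u * Real.log (u / v) := by
  rcases eq_or_lt_of_le hu with h | h
  · simp [← h, hv]
  · have hv' : 0 < v := lt_of_le_of_ne hv (fun h0 => by simp [hac h0.symm] at h)
    have h1 := Real.log_le_sub_one_of_pos (show (0:ℝ) < v / u by positivity)
    have h2 : Real.log (u / v) = - Real.log (v / u) := by
      rw [← Real.log_inv]; congr 1; field_simp
    have h4 : u * Real.log (v/u) ≤ u * (v/u - 1) := mul_le_mul_of_nonneg_left h1 h.le
    have h3 : u * (v/u) = v := by field_simp
    rw [h2]; nlinarith

lemma gibbs_pt_eq {u v : ℝ} (hu : 0 ≤ u) (hv : 0 ≤ v) (hac : v = 0 → u = 0)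
    (heq : u * Real.log (u / v) = u - v) : u = v := by
  rcases eq_or_lt_of_le hu with h | h
  · have : v = 0 := by simpa [← h] using heq.symm
    rw [← h, this]
  · have hv' : 0 < v := lt_of_le_of_ne hv (fun h0 => by simp [hac h0.symm] at h)
    by_contra hne
    have hne1 : v / u ≠ 1 := by
      intro h1
      apply hne
      field_simp at h1
      linarith
    have hstrict := Real.log_lt_sub_one_of_pos (show (0:ℝ) < v / u by positivity) hne1
    have h2 : Real.log (u / v) = - Real.log (v / u) := by
      rw [← Real.log_inv]; congr 1; field_simp
    have h4 : u * Real.log (v/u) < u * (v/u - 1) := (mul_lt_mul_iff_right₀ h).2 hstrict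
    have h3 : u * (v/u) = v := by field_simp
    rw [h2] at heq; nlinarith

lemma jensen_log {ι : Type*} [Fintype ι] {w b : ι → ℝ} (hw : ∀ j, 0 ≤ w j)
    (hw1 : ∑ j, w j = 1) (hpos : ∀ j, w j ≠ 0 → 0 < b j) :
    ∑ j, w j * Real.log (b j) ≤ Real.log (∑ j, w j * b j) := by
  classical
  set t := Finset.univ.filter (fun j => w j ≠ 0) with ht
  have hext : ∀ (f : ι → ℝ), ∑ j ∈ t, w j * f j = ∑ j, w j * f j := by
    intro f
    refine Finset.sum_subset (Finset.filter_subset _ _) ?_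
    intro j _ hj
    have : w j = 0 := by simpa [ht] using hj
    simp [this]
  have hsum1 : ∑ j ∈ t, w j = 1 := by
    rw [← hw1]
    refine Finset.sum_subset (Finset.filter_subset _ _) ?_
    intro j _ hj
    simpa [ht] using hj
  have hcc := strictConcaveOn_log_Ioi.concaveOn
  have hmain := hcc.le_map_sum (t := t) (w := w) (p := b)
    (fun j _ => hw j) hsum1
    (fun j hj => hpos j (by simpa [ht] using hj))
  simp only [smul_eq_mul] at hmain
  calc ∑ j, w j * Real.log (b j) = ∑ j ∈ t, w j * Real.log (b j) := (hext _).symm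
    _ ≤ Real.log (∑ j ∈ t, w j * b j) := hmain
    _ = Real.log (∑ j, w j * b j) := by rw [hext]

lemma relEnt_ge {ι : Type*} [Fintype ι] {u v : ι → ℝ} (hu : IsProbVec u) (hv : IsProbVec v)
    (hac : ∀ i, v i = 0 → u i = 0) : 0 ≤ relEnt u v := by
  have h := Finset.sum_le_sum (fun i (_ : i ∈ Finset.univ) => gibbs_pt (hu.1 i) (hv.1 i) (hac i))
  rw [Finset.sum_sub_distrib, hu.2, hv.2] at h
  simpa [relEnt] using h

lemma relEnt_eq_zero {ι : Type*} [Fintype ι] {u v : ι → ℝ} (hu : IsProbVec u) (hv : IsProbVec v)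
    (hac : ∀ i, v i = 0 → u i = 0) (h : relEnt u v = 0) : u = v := by
  have key : ∀ i ∈ Finset.univ, u i * Real.log (u i / v i) - (u i - v i) = 0 := by
    refine (Finset.sum_eq_zero_iff_of_nonneg ?_).1 ?_
    · intro i _
      linarith [gibbs_pt (hu.1 i) (hv.1 i) (hac i)]
    · rw [Finset.sum_sub_distrib, Finset.sum_sub_distrib, hu.2, hv.2]
      have : ∑ i, u i * Real.log (u i / v i) = 0 := h
      rw [this]; ring
  funext i
  exact gibbs_pt_eq (hu.1 i) (hv.1 i) (hac i) (by linarith [key i (Finset.mem_univ i)])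

lemma relEnt_self {ι : Type*} [Fintype ι] (u : ι → ℝ) : relEnt u u = 0 := by
  unfold relEnt
  refine Finset.sum_eq_zero fun i _ => ?_
  rcases eq_or_ne (u i) 0 with h | h
  · simp [h]
  · simp [div_self h]

lemma transpose_bistoch {ι : Type*} [Fintype ι] {T : Matrix ι ι ℝ} (hT : IsBiStochastic T) :
    IsBiStochastic T.transpose :=
  ⟨⟨fun i j => hT.1.1 j i, fun j => hT.2 j⟩, fun i => hT.1.2 i⟩

lemma mulVec_prob {ι : Type*} [Fintype ι] {T : Matrix ι ι ℝ} (hT : IsColStochastic T)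
    {a : ι → ℝ} (ha : IsProbVec a) : IsProbVec (T.mulVec a) := by
  constructor
  · intro j
    exact Finset.sum_nonneg fun i _ => mul_nonneg (hT.1 j i) (ha.1 i)
  · have : ∑ j, T.mulVec a j = ∑ i, (∑ j, T j i) * a i := by
      simp only [Matrix.mulVec, dotProduct]
      rw [Finset.sum_comm]
      exact Finset.sum_congr rfl fun i _ => by rw [Finset.sum_mul]
    rw [this]
    simp only [hT.2, one_mul]
    exact ha.2

/-- the vector `(TᵀT)a` expressed through `b = Ta`. -/
lemma w_apply {ι : Type*} [Fintype ι] (T : Matrix ι ι ℝ) (a : ι → ℝ) (i : ι) :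
    (T.transpose * T).mulVec a i = ∑ j, T j i * T.mulVec a j := by
  rw [← Matrix.mulVec_mulVec]
  simp [Matrix.mulVec, dotProduct, Matrix.transpose_apply]

lemma exists_col_pos {ι : Type*} [Fintype ι] {T : Matrix ι ι ℝ} (hT : IsBiStochastic T)
    (i : ι) : ∃ j, 0 < T j i := by
  by_contra hcon
  push_neg at hcon
  have : ∑ j, T j i = 0 := Finset.sum_eq_zero fun j _ => le_antisymm (hcon j) (hT.1.1 j i)
  rw [hT.1.2 i] at this
  norm_num at this

lemma b_pos {ι : Type*} [Fintype ι] {T : Matrix ι ι ℝ} (hT : IsBiStochastic T)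
    {a : ι → ℝ} (ha : IsProbVec a) {i j : ι} (hai : 0 < a i) (hji : 0 < T j i) :
    0 < T.mulVec a j := by
  refine Finset.sum_pos' (fun k _ => mul_nonneg (hT.1.1 j k) (ha.1 k)) ⟨i, Finset.mem_univ i, ?_⟩
  exact mul_pos hji hai

lemma w_pos {ι : Type*} [Fintype ι] {T : Matrix ι ι ℝ} (hT : IsBiStochastic T)
    {a : ι → ℝ} (ha : IsProbVec a) {i : ι} (hai : 0 < a i) :
    0 < (T.transpose * T).mulVec a i := by
  obtain ⟨j, hj⟩ := exists_col_pos hT i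
  rw [w_apply]
  refine Finset.sum_pos' (fun k _ => mul_nonneg (hT.1.1 k i)
    (Finset.sum_nonneg fun l _ => mul_nonneg (hT.1.1 k l) (ha.1 l))) ⟨j, Finset.mem_univ j, ?_⟩
  exact mul_pos hj (b_pos hT ha hai hj)

lemma w_ac {ι : Type*} [Fintype ι] {T : Matrix ι ι ℝ} (hT : IsBiStochastic T)
    {a : ι → ℝ} (ha : IsProbVec a) (i : ι) (h : (T.transpose * T).mulVec a i = 0) : a i = 0 := by
  by_contra hne
  exact absurd h (w_pos hT ha (lt_of_le_of_ne (ha.1 i) (Ne.symm hne))).ne'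

lemma w_prob {ι : Type*} [Fintype ι] {T : Matrix ι ι ℝ} (hT : IsBiStochastic T)
    {a : ι → ℝ} (ha : IsProbVec a) : IsProbVec ((T.transpose * T).mulVec a) := by
  rw [← Matrix.mulVec_mulVec]
  exact mulVec_prob (transpose_bistoch hT).1 (mulVec_prob hT.1 ha)

/-- key inequality: `H(a) + H(a‖TᵀTa) ≤ H(Ta)`. -/
lemma key_ineq {ι : Type*} [Fintype ι] {T : Matrix ι ι ℝ} (hT : IsBiStochastic T)
    {a : ι → ℝ} (ha : IsProbVec a) :
    shEnt a + relEnt a ((T.transpose * T).mulVec a) ≤ shEnt (T.mulVec a) := by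
  set b := T.mulVec a with hb
  set w := (T.transpose * T).mulVec a with hwdef
  have hb_ent : shEnt b = -∑ i, a i * ∑ j, T j i * Real.log (b j) := by
    unfold shEnt
    congr 1
    calc ∑ j, b j * Real.log (b j)
        = ∑ j, ∑ i, T j i * a i * Real.log (b j) := by
          refine Finset.sum_congr rfl fun j _ => ?_
          rw [hb]
          simp only [Matrix.mulVec, dotProduct]
          rw [Finset.sum_mul]
      _ = ∑ i, ∑ j, T j i * a i * Real.log (b j) := Finset.sum_comm
      _ = ∑ i, a i * ∑ j, T j i * Real.log (b j) := by
          refine Finset.sum_congr rfl fun i _ => ?_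
          rw [Finset.mul_sum]
          exact Finset.sum_congr rfl fun j _ => by ring
  have main : ∀ i, a i * Real.log (a i / w i) - a i * Real.log (a i)
      ≤ -(a i * ∑ j, T j i * Real.log (b j)) := by
    intro i
    rcases eq_or_lt_of_le (ha.1 i) with h | h
    · simp [← h]
    · have hwpos : 0 < w i := w_pos hT ha h
      have hlog : Real.log (a i / w i) = Real.log (a i) - Real.log (w i) :=
        Real.log_div h.ne' hwpos.ne'
      have hj : ∑ j, T j i * Real.log (b j) ≤ Real.log (w i) := by
        rw [hwdef, w_apply]
        exact jensen_log (fun j => hT.1.1 j i) (hT.1.2 i)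
          (fun j hj => b_pos hT ha h (lt_of_le_of_ne (hT.1.1 j i) (Ne.symm hj)))
      have := mul_le_mul_of_nonneg_left hj h.le
      rw [hlog]
      nlinarith
  have hsum := Finset.sum_le_sum (fun i (_ : i ∈ Finset.univ) => main i)
  rw [Finset.sum_sub_distrib] at hsum
  rw [hb_ent]
  unfold shEnt relEnt
  rw [Finset.sum_neg_distrib] at hsum
  linarith

/-- For a bi-stochastic `T`, a column-stochastic `A`, and a strictly positive
probability weight `p`: `H_p(TA) = H_p(A)` iff `Tᵀ T A = A`. -/
theorem wEnt_mul_eq_iff {N : ℕ} (T A : Matrix (Fin N) (Fin N) ℝ)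
    (hT : IsBiStochastic T) (hA : IsColStochastic A)
    (p : Fin N → ℝ) (hp : IsProbVec p) (hppos : ∀ i, 0 < p i) :
    wEnt p (T * A) = wEnt p A ↔ T.transpose * T * A = A := by
  have hcolA : ∀ ν, IsProbVec (fun i => A i ν) := fun ν => ⟨fun i => hA.1 i ν, hA.2 ν⟩
  have hcolTA : ∀ ν, (fun i => (T * A) i ν) = T.mulVec (fun i => A i ν) := by
    intro ν; funext i; simp [Matrix.mul_apply, Matrix.mulVec, dotProduct]
  have hcolW : ∀ ν, (fun i => (T.transpose * T * A) i ν)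
      = (T.transpose * T).mulVec (fun i => A i ν) := by
    intro ν; funext i; simp [Matrix.mul_apply, Matrix.mulVec, dotProduct]
  constructor
  · intro h
    have hge : ∀ ν, 0 ≤ shEnt (T.mulVec (fun i => A i ν)) - shEnt (fun i => A i ν) := by
      intro ν
      have h1 := key_ineq hT (hcolA ν)
      have h2 := relEnt_ge (hcolA ν) (w_prob hT (hcolA ν)) (w_ac hT (hcolA ν))
      linarith
    have hzero : ∀ ν ∈ Finset.univ,
        p ν * (shEnt (T.mulVec (fun i => A i ν)) - shEnt (fun i => A i ν)) = 0 := by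
      refine (Finset.sum_eq_zero_iff_of_nonneg
        (fun ν _ => mul_nonneg (hp.1 ν) (hge ν))).1 ?_
      have hzero' : wEnt p (T * A) - wEnt p A = 0 := by rw [h]; ring
      rw [← hzero']
      unfold wEnt
      rw [← Finset.sum_sub_distrib]
      refine Finset.sum_congr rfl fun ν _ => ?_
      rw [hcolTA ν]; ring
    ext i ν
    have hd : shEnt (T.mulVec (fun i => A i ν)) - shEnt (fun i => A i ν) = 0 := by
      have h0 := hzero ν (Finset.mem_univ ν)
      exact (mul_eq_zero.1 h0).resolve_left (hppos ν).ne'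
    have hrel : relEnt (fun i => A i ν) ((T.transpose * T).mulVec (fun i => A i ν)) = 0 := by
      have h1 := key_ineq hT (hcolA ν)
      have h2 := relEnt_ge (hcolA ν) (w_prob hT (hcolA ν)) (w_ac hT (hcolA ν))
      linarith
    have heq := relEnt_eq_zero (hcolA ν) (w_prob hT (hcolA ν)) (w_ac hT (hcolA ν)) hrel
    calc (T.transpose * T * A) i ν
        = ((T.transpose * T).mulVec (fun i => A i ν)) i := congrFun (hcolW ν) i
      _ = A i ν := (congrFun heq i).symm
  · intro h
    unfold wEnt
    refine Finset.sum_congr rfl fun ν _ => ?_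
    congr 1
    rw [hcolTA ν]
    have haw : (T.transpose * T).mulVec (fun i => A i ν) = (fun i => A i ν) := by
      funext i
      calc ((T.transpose * T).mulVec (fun i => A i ν)) i
          = (T.transpose * T * A) i ν := (congrFun (hcolW ν) i).symm
        _ = A i ν := by rw [h]
    have hle1 : shEnt (fun i => A i ν) ≤ shEnt (T.mulVec (fun i => A i ν)) := by
      have h1 := key_ineq hT (hcolA ν)
      rw [haw, relEnt_self] at h1
      linarith
    have hle2 : shEnt (T.mulVec (fun i => A i ν)) ≤ shEnt (fun i => A i ν) := by
      have hb := mulVec_prob hT.1 (hcolA ν)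
      have hTt := transpose_bistoch hT
      have h1 := key_ineq hTt hb
      have h2 := relEnt_ge hb (w_prob hTt hb) (w_ac hTt hb)
      have h3 : T.transpose.mulVec (T.mulVec (fun i => A i ν)) = (fun i => A i ν) := by
        rw [Matrix.mulVec_mulVec]; exact haw
      rw [h3] at h1
      linarith
    linarith
end

section
/- Let X_L be an m×m column-stochastic matrix, π_L an m×m permutation matrix, Y_R an n×n column-stochastic matrix, and π_R an n×n permutation matrix. Set X = X_L ⊗ π_R and Y = π_L ⊗ Y_R (Kronecker products, both mn×mn column-stochastic matrices). Then H(XY) = H(X) + H(Y), where for an N×N column-stochastic matrix T with columns t_ν, H(T) = (1/N) Σ_ν H(t_ν) is the weighted entropy with respect to the uniform distribution. -/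
open Finset

/-- Uniform-weight entropy `H(T) = (1/N) Σ_ν H(t_ν)` of a square matrix. -/
noncomputable def uEnt {ι : Type*} [Fintype ι] (T : Matrix ι ι ℝ) : ℝ :=
  (Fintype.card ι : ℝ)⁻¹ * ∑ ν, shEnt (fun i => T i ν)

/-! By the mixed-product rule, `XY = (X_L π_L) ⊗ (π_R Y_R)`. The entropy of a product
column `a ⊗ b` of probability vectors is `H(a) + H(b)`, so the uniform-weight entropy is additive
on Kronecker products of column-stochastic matrices; multiplying by a permutation matrix
only reorders columns or entries, and a permutation matrix has entropy zero. -/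

open Matrix

section Entropy

variable {ι κ : Type*} [Fintype ι] [Fintype κ]

lemma shEnt_eq_sum_negMulLog (u : ι → ℝ) : shEnt u = ∑ i, Real.negMulLog (u i) := by
  simp [shEnt, Real.negMulLog_eq_neg, sum_neg_distrib]

lemma shEnt_comp_equiv (u : ι → ℝ) (e : κ ≃ ι) : shEnt (u ∘ e) = shEnt u := by
  simp only [shEnt_eq_sum_negMulLog, Function.comp_apply]
  exact e.sum_comp fun i => Real.negMulLog (u i)

lemma shEnt_prod_mul (u : ι → ℝ) (v : κ → ℝ) :
    shEnt (fun p : ι × κ => u p.1 * v p.2) = (∑ j, v j) * shEnt u + (∑ i, u i) * shEnt v := by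
  simp only [shEnt_eq_sum_negMulLog, Real.negMulLog_mul, Fintype.sum_prod_type, sum_add_distrib,
    ← mul_sum, ← sum_mul]

end Entropy

section Permutation

variable {ι : Type*} [Fintype ι]

lemma existsUnique_eq_one_of_sum_eq_one {v : ι → ℝ} (h01 : ∀ i, v i = 0 ∨ v i = 1)
    (hsum : ∑ i, v i = 1) : ∃! i, v i = 1 := by
  have hcard : #{i | v i = 1} = 1 := by
    have : ∑ i, v i = ∑ i, if v i = 1 then (1 : ℝ) else 0 :=
      sum_congr rfl fun i _ => by rcases h01 i with h | h <;> simp [h]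
    rw [this, sum_boole] at hsum
    exact_mod_cast hsum
  obtain ⟨a, ha⟩ := card_eq_one.mp hcard
  refine ⟨a, ?_, fun i hi => ?_⟩
  · simpa using (Finset.ext_iff.mp ha a).mpr (mem_singleton_self a)
  · simpa using (Finset.ext_iff.mp ha i).mp (by simpa using hi)

lemma IsPermMatrix.exists_eq_permMatrix [DecidableEq ι] {P : Matrix ι ι ℝ}
    (hP : IsPermMatrix P) : ∃ σ : Equiv.Perm ι, P = σ.permMatrix ℝ := by
  obtain ⟨h01, hrow, hcol⟩ := hP
  choose f hf hf_unique using fun i => existsUnique_eq_one_of_sum_eq_one (h01 i) (hrow i)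
  choose g hg hg_unique using
    fun j => existsUnique_eq_one_of_sum_eq_one (fun i => h01 i j) (hcol j)
  let σ : Equiv.Perm ι :=
    ⟨f, g, fun i => (hg_unique _ i (hf i)).symm, fun j => (hf_unique _ j (hg j)).symm⟩
  refine ⟨σ, ext fun i j => ?_⟩
  change P i j = σ.toPEquiv.toMatrix i j
  rw [PEquiv.toMatrix_toPEquiv_apply, Pi.single_apply]
  split_ifs with h
  · exact h ▸ hf i
  · exact (h01 i j).resolve_right fun h1 => h (hf_unique i j h1)

lemma IsPermMatrix.uEnt_eq_zero {P : Matrix ι ι ℝ} (hP : IsPermMatrix P) : uEnt P = 0 := by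
  have hcol : ∀ j, shEnt (fun i => P i j) = 0 := fun j => by
    rw [shEnt_eq_sum_negMulLog]
    exact sum_eq_zero fun i _ => by rcases hP.1 i j with h | h <;> simp [h]
  simp [uEnt, hcol]

variable [DecidableEq ι]

lemma uEnt_mul_permMatrix (A : Matrix ι ι ℝ) (σ : Equiv.Perm ι) :
    uEnt (A * σ.permMatrix ℝ) = uEnt A := by
  rw [PEquiv.mul_toMatrix_toPEquiv, uEnt, uEnt]
  congr 1
  exact σ.symm.sum_comp fun j => shEnt fun i => A i j

lemma uEnt_permMatrix_mul (σ : Equiv.Perm ι) (B : Matrix ι ι ℝ) :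
    uEnt (σ.permMatrix ℝ * B) = uEnt B := by
  rw [PEquiv.toMatrix_toPEquiv_mul, uEnt, uEnt]
  congr 1
  exact sum_congr rfl fun j _ => shEnt_comp_equiv (fun i => B i j) σ

end Permutation

lemma uEnt_kronecker {ι κ : Type*} [Fintype ι] [Fintype κ] [Nonempty ι] [Nonempty κ]
    {A : Matrix ι ι ℝ} {B : Matrix κ κ ℝ}
    (hA : ∀ j, ∑ i, A i j = 1) (hB : ∀ j, ∑ i, B i j = 1) :
    uEnt (kroneckerMap (· * ·) A B) = uEnt A + uEnt B := by
  have hcol : ∀ j₁ j₂, shEnt (fun i : ι × κ => kroneckerMap (· * ·) A B i (j₁, j₂)) =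
      shEnt (fun i => A i j₁) + shEnt (fun i => B i j₂) := fun j₁ j₂ => by
    simpa [hA, hB] using shEnt_prod_mul (fun i => A i j₁) (fun i => B i j₂)
  simp only [uEnt, Fintype.sum_prod_type, hcol, sum_add_distrib, sum_const, card_univ,
    Fintype.card_prod, nsmul_eq_mul, Nat.cast_mul, ← mul_sum]
  field_simp

/-- Additivity of the uniform-weight entropy: for `X = X_L ⊗ π_R` and
`Y = π_L ⊗ Y_R` with `X_L, Y_R` column-stochastic and `π_L, π_R` permutation
matrices, `H(XY) = H(X) + H(Y)`. -/
theorem uEnt_mul_kronecker {m n : ℕ}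
    (XL : Matrix (Fin m) (Fin m) ℝ) (πL : Matrix (Fin m) (Fin m) ℝ)
    (YR : Matrix (Fin n) (Fin n) ℝ) (πR : Matrix (Fin n) (Fin n) ℝ)
    (hXL : IsColStochastic XL) (hπL : IsPermMatrix πL)
    (hYR : IsColStochastic YR) (hπR : IsPermMatrix πR) :
    uEnt (Matrix.kroneckerMap (· * ·) XL πR * Matrix.kroneckerMap (· * ·) πL YR) =
      uEnt (Matrix.kroneckerMap (· * ·) XL πR) +
        uEnt (Matrix.kroneckerMap (· * ·) πL YR) := by
  -- `uEnt_kronecker` needs both factors nonempty; otherwise every matrix here has no columns.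
  rcases isEmpty_or_nonempty (Fin m) with hm | hm
  · simp [uEnt]
  rcases isEmpty_or_nonempty (Fin n) with hn | hn
  · simp [uEnt]
  obtain ⟨σL, rfl⟩ := hπL.exists_eq_permMatrix
  obtain ⟨σR, rfl⟩ := hπR.exists_eq_permMatrix
  have hX : XL * σL.permMatrix ℝ ∈ colStochastic ℝ (Fin m) :=
    mul_mem (mem_colStochastic_iff_sum.mpr hXL) permMatrix_mem_colStochastic
  have hY : σR.permMatrix ℝ * YR ∈ colStochastic ℝ (Fin n) :=
    mul_mem permMatrix_mem_colStochastic (mem_colStochastic_iff_sum.mpr hYR)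
  rw [← mul_kronecker_mul,
    uEnt_kronecker (sum_col_of_mem_colStochastic hX) (sum_col_of_mem_colStochastic hY),
    uEnt_kronecker hXL.2 hπR.2.2, uEnt_kronecker hπL.2.2 hYR.2, uEnt_mul_permMatrix,
    uEnt_permMatrix_mul, hπL.uEnt_eq_zero, hπR.uEnt_eq_zero, add_zero, zero_add]
end

section
/- Let K be a positive integer and for each k ∈ {1,…,K} let m_k, n_k be positive integers, with coordinates indexed by the sigma type of pairs (k,(s,t)), s ∈ Fin m_k, t ∈ Fin n_k, and N = Σ_k m_k n_k. For each k let X_k^L, Y_k^L be m_k×m_k column-stochastic matrices, π_k^L an m_k×m_k permutation matrix, Y_k^R, Z_k^R n_k×n_k column-stochastic matrices, and π_k^R an n_k×n_k permutation matrix. Define the block-diagonal matrices X = ⊕_k (X_k^L ⊗ π_k^R), Y = ⊕_k (Y_k^L ⊗ Y_k^R), Z = ⊕_k (π_k^L ⊗ Z_k^R). Then H(XYZ) + H(Y) = H(XY) + H(YZ), where H(T) = (1/N) Σ_ν H(t_ν) is the uniform-weight entropy of a column-stochastic matrix T with columns t_ν. -/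
open Finset

section Aux
variable {ι : Type*} [Fintype ι] [DecidableEq ι]

lemma colSumOne_mul {A B : Matrix ι ι ℝ} (hA : ∀ j, ∑ i, A i j = 1)
    (hB : ∀ j, ∑ i, B i j = 1) : ∀ j, ∑ i, (A * B) i j = 1 := by
  intro j
  simp only [Matrix.mul_apply]
  rw [Finset.sum_comm]
  simp [← Finset.sum_mul, hA, hB j]

lemma IsPermMatrix.exists_equiv {π : Matrix ι ι ℝ} (h : IsPermMatrix π) :
    ∃ σ : Equiv.Perm ι, ∀ i j, π i j = if i = σ j then 1 else 0 := by
  have hnn : ∀ i j, 0 ≤ π i j := by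
    intro i j
    rcases h.1 i j with h0 | h1
    · simp [h0]
    · simp [h1]
  have two_ones : ∀ j j' i, j ≠ j' → π i j = 1 → π i j' = 1 → False := by
    intro j j' i hne h1 h1'
    have hsub : ({j, j'} : Finset ι) ⊆ Finset.univ := Finset.subset_univ _
    have hle : ∑ x ∈ ({j, j'} : Finset ι), π i x ≤ ∑ x, π i x :=
      Finset.sum_le_sum_of_subset_of_nonneg hsub (fun x _ _ => hnn i x)
    rw [Finset.sum_pair hne, h1, h1', h.2.1 i] at hle
    linarith
  have two_ones_col : ∀ i i' j, i ≠ i' → π i j = 1 → π i' j = 1 → False := by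
    intro i i' j hne h1 h1'
    have hle : ∑ x ∈ ({i, i'} : Finset ι), π x j ≤ ∑ x, π x j :=
      Finset.sum_le_sum_of_subset_of_nonneg (Finset.subset_univ _) (fun x _ _ => hnn x j)
    rw [Finset.sum_pair hne, h1, h1', h.2.2 j] at hle
    linarith
  have hex : ∀ j, ∃ i, π i j = 1 := by
    intro j
    by_contra hc
    push_neg at hc
    have hz : ∀ i, π i j = 0 := fun i => (h.1 i j).resolve_right (hc i)
    have := h.2.2 j
    simp [hz] at this
  choose f hf using hex
  have hinj : Function.Injective f := by
    intro j j' hjj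
    by_contra hne
    exact two_ones j j' (f j) hne (hf j) (hjj ▸ hf j')
  let σ := Equiv.ofBijective f (Finite.injective_iff_bijective.mp hinj)
  refine ⟨σ, fun i j => ?_⟩
  by_cases hij : i = σ j
  · simp only [hij, if_pos rfl]
    exact hf j
  · rw [if_neg hij]
    rcases h.1 i j with h0 | h1
    · exact h0
    · exact (two_ones_col i (σ j) j hij h1 (hf j)).elim

lemma perm_mul_apply {π B : Matrix ι ι ℝ} {σ : Equiv.Perm ι}
    (hσ : ∀ i j, π i j = if i = σ j then 1 else 0) (i t : ι) :
    (π * B) i t = B (σ.symm i) t := by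
  simp only [Matrix.mul_apply, hσ]
  have : ∀ j, (if i = σ j then (1:ℝ) else 0) * B j t = if j = σ.symm i then B j t else 0 := by
    intro j
    by_cases hj : j = σ.symm i
    · subst hj; simp
    · rw [if_neg hj, if_neg, zero_mul]
      intro hc
      exact hj (by simp [hc])
  simp [this]

lemma shEnt_perm_mul_col {π B : Matrix ι ι ℝ} (h : IsPermMatrix π) (t : ι) :
    shEnt (fun i => (π * B) i t) = shEnt (fun i => B i t) := by
  obtain ⟨σ, hσ⟩ := h.exists_equiv
  have : (fun i => (π * B) i t) = fun i => B (σ.symm i) t := by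
    funext i; exact perm_mul_apply hσ i t
  rw [this, shEnt, shEnt]
  congr 1
  exact (Equiv.sum_comp σ.symm (fun i => B i t * Real.log (B i t)))

lemma mul_perm_apply {A π : Matrix ι ι ℝ} {σ : Equiv.Perm ι}
    (hσ : ∀ i j, π i j = if i = σ j then 1 else 0) (i s : ι) :
    (A * π) i s = A i (σ s) := by
  simp only [Matrix.mul_apply, hσ]
  simp [Finset.sum_ite_eq' Finset.univ (σ s) (fun j => A i j)]

lemma sum_shEnt_mul_perm {A π : Matrix ι ι ℝ} (h : IsPermMatrix π) :
    ∑ s, shEnt (fun i => (A * π) i s) = ∑ s, shEnt (fun i => A i s) := by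
  obtain ⟨σ, hσ⟩ := h.exists_equiv
  have h1 : ∀ s, shEnt (fun i => (A * π) i s) = shEnt (fun i => A i (σ s)) := by
    intro s; congr 1; funext i; exact mul_perm_apply hσ i s
  simp only [h1]
  exact Equiv.sum_comp σ (fun s => shEnt (fun i => A i s))

end Aux

section Kron
variable {α β : Type*} [Fintype α] [Fintype β]

lemma shEnt_prod_col (a : α → ℝ) (b : β → ℝ) (ha : ∑ i, a i = 1) (hb : ∑ j, b j = 1) :
    shEnt (fun p : α × β => a p.1 * b p.2) = shEnt a + shEnt b := by
  have key : ∀ (x y : ℝ), x * y * Real.log (x * y)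
      = x * y * Real.log x + x * y * Real.log y := by
    intro x y
    by_cases hx : x = 0
    · simp [hx]
    by_cases hy : y = 0
    · simp [hy]
    rw [Real.log_mul hx hy]; ring
  simp only [shEnt, Fintype.sum_prod_type]
  rw [← neg_add]
  congr 1
  have key2 : ∀ (x y : ℝ), x * y * Real.log (x * y)
      = (x * Real.log x) * y + x * (y * Real.log y) := by
    intro x y; rw [key x y]; ring
  calc ∑ i, ∑ j, a i * b j * Real.log (a i * b j)
      = ∑ i, ∑ j, ((a i * Real.log (a i)) * b j + a i * (b j * Real.log (b j))) := by
        simp only [key2]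
    _ = (∑ i, a i * Real.log (a i)) * (∑ j, b j)
        + (∑ i, a i) * (∑ j, b j * Real.log (b j)) := by
        simp only [Finset.sum_add_distrib, ← Finset.mul_sum, ← Finset.sum_mul]
    _ = (∑ i, a i * Real.log (a i)) + (∑ j, b j * Real.log (b j)) := by
        rw [ha, hb]; ring
end Kron

section Kron2
variable {α β : Type*} [Fintype α] [Fintype β]

lemma sum_shEnt_kron (A : Matrix α α ℝ) (B : Matrix β β ℝ)
    (hA : ∀ j, ∑ i, A i j = 1) (hB : ∀ j, ∑ i, B i j = 1) :
    ∑ p : α × β, shEnt (fun q : α × β => A q.1 p.1 * B q.2 p.2)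
      = (Fintype.card β : ℝ) * ∑ s, shEnt (fun i => A i s)
        + (Fintype.card α : ℝ) * ∑ t, shEnt (fun j => B j t) := by
  rw [Fintype.sum_prod_type]
  have h1 : ∀ (s : α) (t : β), shEnt (fun q : α × β => A q.1 s * B q.2 t)
      = shEnt (fun i => A i s) + shEnt (fun j => B j t) := fun s t =>
    shEnt_prod_col (fun i => A i s) (fun j => B j t) (hA s) (hB t)
  simp only [h1, Finset.sum_add_distrib, Finset.sum_const, Finset.card_univ,
    nsmul_eq_mul, ← Finset.mul_sum]

end Kron2

section Block
variable {K : ℕ} {m n : Fin K → ℕ}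

abbrev BIdx (m n : Fin K → ℕ) := Σ k : Fin K, Fin (m k) × Fin (n k)

lemma block_mul_off (X Y : Matrix (BIdx m n) (BIdx m n) ℝ)
    (hXoff : ∀ x y : BIdx m n, x.1 ≠ y.1 → X x y = 0)
    (hYoff : ∀ x y : BIdx m n, x.1 ≠ y.1 → Y x y = 0) :
    ∀ x y : BIdx m n, x.1 ≠ y.1 → (X * Y) x y = 0 := by
  intro x y hxy
  rw [Matrix.mul_apply]
  apply Finset.sum_eq_zero
  intro z _
  by_cases hz : z.1 = x.1
  · rw [hYoff z y (hz ▸ hxy), mul_zero]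
  · rw [hXoff x z (fun hc => hz hc.symm), zero_mul]

lemma block_mul_diag (X Y : Matrix (BIdx m n) (BIdx m n) ℝ)
    (hXoff : ∀ x y : BIdx m n, x.1 ≠ y.1 → X x y = 0)
    (k : Fin K) (a b : Fin (m k) × Fin (n k)) :
    (X * Y) ⟨k, a⟩ ⟨k, b⟩ = ∑ c, X ⟨k, a⟩ ⟨k, c⟩ * Y ⟨k, c⟩ ⟨k, b⟩ := by
  rw [Matrix.mul_apply, ← Finset.univ_sigma_univ, Finset.sum_sigma]
  rw [Finset.sum_eq_single k]
  · intro j _ hj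
    apply Finset.sum_eq_zero
    intro c _
    rw [hXoff ⟨k, a⟩ ⟨j, c⟩ (fun hc => hj hc.symm), zero_mul]
  · intro h; exact absurd (Finset.mem_univ k) h

lemma sum_shEnt_block (T : Matrix (BIdx m n) (BIdx m n) ℝ)
    (hoff : ∀ x y : BIdx m n, x.1 ≠ y.1 → T x y = 0) :
    ∑ ν, shEnt (fun i => T i ν)
      = ∑ k, ∑ a : Fin (m k) × Fin (n k), shEnt (fun b => T ⟨k, b⟩ ⟨k, a⟩) := by
  rw [← Finset.univ_sigma_univ, Finset.sum_sigma]
  apply Finset.sum_congr rfl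
  intro k _
  apply Finset.sum_congr rfl
  intro a _
  simp only [shEnt]
  congr 1
  rw [← Finset.univ_sigma_univ, Finset.sum_sigma]
  rw [Finset.sum_eq_single k]
  · intro j _ hj
    apply Finset.sum_eq_zero
    intro b _
    rw [hoff ⟨j, b⟩ ⟨k, a⟩ hj]
    simp
  · intro h; exact absurd (Finset.mem_univ k) h

end Block

theorem uEnt_strong_subadd_eq' {K : ℕ} (hK : 0 < K) (m n : Fin K → ℕ)
    (hm : ∀ k, 0 < m k) (hn : ∀ k, 0 < n k)
    (XL YL : ∀ k, Matrix (Fin (m k)) (Fin (m k)) ℝ)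
    (πL : ∀ k, Matrix (Fin (m k)) (Fin (m k)) ℝ)
    (YR ZR : ∀ k, Matrix (Fin (n k)) (Fin (n k)) ℝ)
    (πR : ∀ k, Matrix (Fin (n k)) (Fin (n k)) ℝ)
    (hXL : ∀ k, ∀ j, ∑ i, XL k i j = 1) (hYL : ∀ k, ∀ j, ∑ i, YL k i j = 1)
    (hπL : ∀ k, IsPermMatrix (πL k))
    (hYR : ∀ k, ∀ j, ∑ i, YR k i j = 1) (hZR : ∀ k, ∀ j, ∑ i, ZR k i j = 1)
    (hπR : ∀ k, IsPermMatrix (πR k))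
    (X Y Z : Matrix (BIdx m n) (BIdx m n) ℝ)
    (hXdiag : ∀ k (a b : Fin (m k) × Fin (n k)),
      X ⟨k, a⟩ ⟨k, b⟩ = Matrix.kroneckerMap (· * ·) (XL k) (πR k) a b)
    (hXoff : ∀ x y : BIdx m n, x.1 ≠ y.1 → X x y = 0)
    (hYdiag : ∀ k (a b : Fin (m k) × Fin (n k)),
      Y ⟨k, a⟩ ⟨k, b⟩ = Matrix.kroneckerMap (· * ·) (YL k) (YR k) a b)
    (hYoff : ∀ x y : BIdx m n, x.1 ≠ y.1 → Y x y = 0)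
    (hZdiag : ∀ k (a b : Fin (m k) × Fin (n k)),
      Z ⟨k, a⟩ ⟨k, b⟩ = Matrix.kroneckerMap (· * ·) (πL k) (ZR k) a b)
    (hZoff : ∀ x y : BIdx m n, x.1 ≠ y.1 → Z x y = 0) :
    (∑ ν, shEnt (fun i => (X * Y * Z) i ν)) + (∑ ν, shEnt (fun i => Y i ν))
      = (∑ ν, shEnt (fun i => (X * Y) i ν)) + (∑ ν, shEnt (fun i => (Y * Z) i ν)) := by
  have hπLc : ∀ k, ∀ j, ∑ i, πL k i j = 1 := fun k => (hπL k).2.2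
  have hπRc : ∀ k, ∀ j, ∑ i, πR k i j = 1 := fun k => (hπR k).2.2
  -- off-diagonal of products
  have hXYoff := block_mul_off X Y hXoff hYoff
  have hYZoff := block_mul_off Y Z hYoff hZoff
  have hXYZoff := block_mul_off (X * Y) Z hXYoff hZoff
  -- diagonal blocks of products
  have hXYdiag : ∀ k (a b : Fin (m k) × Fin (n k)),
      (X * Y) ⟨k, a⟩ ⟨k, b⟩
        = Matrix.kroneckerMap (· * ·) (XL k * YL k) (πR k * YR k) a b := by
    intro k a b
    rw [block_mul_diag X Y hXoff k a b]
    simp only [hXdiag, hYdiag]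
    rw [← Matrix.mul_apply, Matrix.mul_kronecker_mul]
  have hYZdiag : ∀ k (a b : Fin (m k) × Fin (n k)),
      (Y * Z) ⟨k, a⟩ ⟨k, b⟩
        = Matrix.kroneckerMap (· * ·) (YL k * πL k) (YR k * ZR k) a b := by
    intro k a b
    rw [block_mul_diag Y Z hYoff k a b]
    simp only [hYdiag, hZdiag]
    rw [← Matrix.mul_apply, Matrix.mul_kronecker_mul]
  have hXYZdiag : ∀ k (a b : Fin (m k) × Fin (n k)),
      (X * Y * Z) ⟨k, a⟩ ⟨k, b⟩
        = Matrix.kroneckerMap (· * ·) (XL k * YL k * πL k) (πR k * YR k * ZR k) a b := by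
    intro k a b
    rw [block_mul_diag (X * Y) Z hXYoff k a b]
    simp only [hXYdiag, hZdiag]
    rw [← Matrix.mul_apply]
    rw [Matrix.mul_kronecker_mul (XL k * YL k) (πL k) (πR k * YR k) (ZR k)]
  -- block entropy sums
  rw [sum_shEnt_block _ hXYZoff, sum_shEnt_block _ hYoff,
      sum_shEnt_block _ hXYoff, sum_shEnt_block _ hYZoff]
  rw [← Finset.sum_add_distrib, ← Finset.sum_add_distrib]
  apply Finset.sum_congr rfl
  intro k _
  -- rewrite each inner sum using the Kronecker structure
  have eY : ∑ a : Fin (m k) × Fin (n k), shEnt (fun b => Y ⟨k, b⟩ ⟨k, a⟩)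
      = (n k : ℝ) * ∑ s, shEnt (fun i => YL k i s)
        + (m k : ℝ) * ∑ t, shEnt (fun j => YR k j t) := by
    have := sum_shEnt_kron (YL k) (YR k) (hYL k) (hYR k)
    simp only [Fintype.card_fin] at this
    rw [← this]
    apply Finset.sum_congr rfl
    intro a _
    congr 1
    funext b
    rw [hYdiag k b a]
    rfl
  have eXY : ∑ a : Fin (m k) × Fin (n k), shEnt (fun b => (X * Y) ⟨k, b⟩ ⟨k, a⟩)
      = (n k : ℝ) * ∑ s, shEnt (fun i => (XL k * YL k) i s)
        + (m k : ℝ) * ∑ t, shEnt (fun j => YR k j t) := by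
    have h := sum_shEnt_kron (XL k * YL k) (πR k * YR k)
      (colSumOne_mul (hXL k) (hYL k)) (colSumOne_mul (hπRc k) (hYR k))
    simp only [Fintype.card_fin] at h
    have h2 : ∀ t, shEnt (fun j => (πR k * YR k) j t) = shEnt (fun j => YR k j t) :=
      fun t => shEnt_perm_mul_col (hπR k) t
    simp only [h2] at h
    rw [← h]
    apply Finset.sum_congr rfl
    intro a _
    congr 1
    funext b
    rw [hXYdiag k b a]
    rfl
  have eYZ : ∑ a : Fin (m k) × Fin (n k), shEnt (fun b => (Y * Z) ⟨k, b⟩ ⟨k, a⟩)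
      = (n k : ℝ) * ∑ s, shEnt (fun i => YL k i s)
        + (m k : ℝ) * ∑ t, shEnt (fun j => (YR k * ZR k) j t) := by
    have h := sum_shEnt_kron (YL k * πL k) (YR k * ZR k)
      (colSumOne_mul (hYL k) (hπLc k)) (colSumOne_mul (hYR k) (hZR k))
    simp only [Fintype.card_fin] at h
    rw [sum_shEnt_mul_perm (hπL k)] at h
    rw [← h]
    apply Finset.sum_congr rfl
    intro a _
    congr 1
    funext b
    rw [hYZdiag k b a]
    rfl
  have eXYZ : ∑ a : Fin (m k) × Fin (n k), shEnt (fun b => (X * Y * Z) ⟨k, b⟩ ⟨k, a⟩)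
      = (n k : ℝ) * ∑ s, shEnt (fun i => (XL k * YL k) i s)
        + (m k : ℝ) * ∑ t, shEnt (fun j => (YR k * ZR k) j t) := by
    have h := sum_shEnt_kron (XL k * YL k * πL k) (πR k * YR k * ZR k)
      (colSumOne_mul (colSumOne_mul (hXL k) (hYL k)) (hπLc k))
      (colSumOne_mul (colSumOne_mul (hπRc k) (hYR k)) (hZR k))
    simp only [Fintype.card_fin] at h
    rw [sum_shEnt_mul_perm (hπL k)] at h
    have h2 : ∀ t, shEnt (fun j => (πR k * YR k * ZR k) j t)
        = shEnt (fun j => (YR k * ZR k) j t) := by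
      intro t
      rw [mul_assoc]
      exact shEnt_perm_mul_col (hπR k) t
    simp only [h2] at h
    rw [← h]
    apply Finset.sum_congr rfl
    intro a _
    congr 1
    funext b
    rw [hXYZdiag k b a]
    rfl
  rw [eY, eXY, eYZ, eXYZ]
  ring

/-- Saturation of strong subadditivity of the uniform-weight entropy for
block-diagonal matrices `X = ⊕_k (X_k^L ⊗ π_k^R)`, `Y = ⊕_k (Y_k^L ⊗ Y_k^R)`,
`Z = ⊕_k (π_k^L ⊗ Z_k^R)`: `H(XYZ) + H(Y) = H(XY) + H(YZ)`. -/
theorem uEnt_strong_subadd_eq {K : ℕ} (hK : 0 < K) (m n : Fin K → ℕ)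
    (hm : ∀ k, 0 < m k) (hn : ∀ k, 0 < n k)
    (XL YL : ∀ k, Matrix (Fin (m k)) (Fin (m k)) ℝ)
    (πL : ∀ k, Matrix (Fin (m k)) (Fin (m k)) ℝ)
    (YR ZR : ∀ k, Matrix (Fin (n k)) (Fin (n k)) ℝ)
    (πR : ∀ k, Matrix (Fin (n k)) (Fin (n k)) ℝ)
    (hXL : ∀ k, IsColStochastic (XL k)) (hYL : ∀ k, IsColStochastic (YL k))
    (hπL : ∀ k, IsPermMatrix (πL k))
    (hYR : ∀ k, IsColStochastic (YR k)) (hZR : ∀ k, IsColStochastic (ZR k))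
    (hπR : ∀ k, IsPermMatrix (πR k))
    (X Y Z : Matrix (Σ k : Fin K, Fin (m k) × Fin (n k))
                    (Σ k : Fin K, Fin (m k) × Fin (n k)) ℝ)
    (hXdiag : ∀ k (a b : Fin (m k) × Fin (n k)),
      X ⟨k, a⟩ ⟨k, b⟩ = Matrix.kroneckerMap (· * ·) (XL k) (πR k) a b)
    (hXoff : ∀ x y : (Σ k : Fin K, Fin (m k) × Fin (n k)), x.1 ≠ y.1 → X x y = 0)
    (hYdiag : ∀ k (a b : Fin (m k) × Fin (n k)),
      Y ⟨k, a⟩ ⟨k, b⟩ = Matrix.kroneckerMap (· * ·) (YL k) (YR k) a b)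
    (hYoff : ∀ x y : (Σ k : Fin K, Fin (m k) × Fin (n k)), x.1 ≠ y.1 → Y x y = 0)
    (hZdiag : ∀ k (a b : Fin (m k) × Fin (n k)),
      Z ⟨k, a⟩ ⟨k, b⟩ = Matrix.kroneckerMap (· * ·) (πL k) (ZR k) a b)
    (hZoff : ∀ x y : (Σ k : Fin K, Fin (m k) × Fin (n k)), x.1 ≠ y.1 → Z x y = 0) :
    uEnt (X * Y * Z) + uEnt Y = uEnt (X * Y) + uEnt (Y * Z) := by
  have h := uEnt_strong_subadd_eq' hK m n hm hn XL YL πL YR ZR πR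
    (fun k => (hXL k).2) (fun k => (hYL k).2) hπL
    (fun k => (hYR k).2) (fun k => (hZR k).2) hπR
    X Y Z hXdiag hXoff hYdiag hYoff hZdiag hZoff
  simp only [uEnt]
  rw [← mul_add, ← mul_add, h]
end

section
/- Let X, Y, Z be N×N column-stochastic matrices and p an N-dimensional probability vector that is invariant for all three, i.e., Xp = Yp = Zp = p. Then the strong subadditivity inequality H_p(XYZ) + H_p(Y) ≤ H_p(XY) + H_p(YZ) holds, where H_p(T) = Σ_ν p_ν H(t_ν) is the weighted entropy of T with columns t_ν. -/
open Finset

/-! For nonnegative `W`, `Z` with `Z p = p`, expanding the logarithms gives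
`H_p(W Z) - H_p(W) = Σ_{j,k} Z_{jk} p_k relEnt(w_j, (W Z)_k)`, where `w_j` and `(W Z)_k` are
columns. Taking `W = Y` and `W = X Y`, the columns of `X Y` and `X Y Z` are the images under `X`
of the columns of `Y` and `Y Z`, so the data-processing inequality
`relEnt(X a, X b) ≤ relEnt(a, b)`, a consequence of the log-sum inequality, compares the two
expansions term by term. -/

open scoped Matrix

theorem Real.mul_log_add_sub_mul_le_mul_log_div {x y c : ℝ} (hx : 0 ≤ x) (hy : 0 ≤ y)
    (hxy : y = 0 → x = 0) (hc : 0 < c) :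
    x * Real.log c + x - c * y ≤ x * Real.log (x / y) := by
  rcases hx.eq_or_lt with rfl | hx
  · simpa using mul_nonneg hc.le hy
  have hy : 0 < y := hy.lt_of_ne fun h => hx.ne' (hxy h.symm)
  have hlog := Real.log_le_sub_one_of_pos (show 0 < c * y / x by positivity)
  rw [Real.log_div (by positivity) hx.ne', Real.log_mul hc.ne' hy.ne'] at hlog
  have hscaled := mul_le_mul_of_nonneg_left hlog hx.le
  have hcancel : x * (c * y / x - 1) = c * y - x := by field_simp
  rw [Real.log_div hx.ne' hy.ne']
  linarith

section

variable {ι : Type*} [Fintype ι]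

theorem sum_mul_log_div_sum_le_sum_mul_log_div {a b : ι → ℝ} (ha : ∀ i, 0 ≤ a i)
    (hb : ∀ i, 0 ≤ b i) (hab : ∀ i, b i = 0 → a i = 0) :
    (∑ i, a i) * Real.log ((∑ i, a i) / ∑ i, b i) ≤ ∑ i, a i * Real.log (a i / b i) := by
  rcases (sum_nonneg fun i _ => ha i).eq_or_lt with hA | hA
  · have ha0 : ∀ i, a i = 0 := fun i =>
      (sum_eq_zero_iff_of_nonneg fun i _ => ha i).mp hA.symm i (mem_univ i)
    simp [ha0]
  have hB : 0 < ∑ i, b i := by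
    refine (sum_nonneg fun i _ => hb i).lt_of_ne fun hB => hA.ne' ?_
    have hb0 := (sum_eq_zero_iff_of_nonneg fun i _ => hb i).mp hB.symm
    exact sum_eq_zero fun i hi => hab i (hb0 i hi)
  set c := (∑ i, a i) / ∑ i, b i
  calc (∑ i, a i) * Real.log c = ∑ i, (a i * Real.log c + a i - c * b i) := by
        rw [sum_sub_distrib, sum_add_distrib, ← sum_mul, ← mul_sum]
        have hcB : c * ∑ i, b i = ∑ i, a i := div_mul_cancel₀ _ hB.ne'
        linarith
    _ ≤ ∑ i, a i * Real.log (a i / b i) := sum_le_sum fun i _ =>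
        Real.mul_log_add_sub_mul_le_mul_log_div (ha i) (hb i) (hab i) (by positivity)

theorem relEnt_mulVec_le_s17 {X : Matrix ι ι ℝ} (hX : IsColStochastic X) {a b : ι → ℝ}
    (ha : ∀ i, 0 ≤ a i) (hb : ∀ i, 0 ≤ b i) (hab : ∀ i, b i = 0 → a i = 0) :
    relEnt (X *ᵥ a) (X *ᵥ b) ≤ relEnt a b := by
  have hrow : ∀ i j, X i j * a j * Real.log (X i j * a j / (X i j * b j)) =
      X i j * (a j * Real.log (a j / b j)) := by
    intro i j
    rcases eq_or_ne (X i j) 0 with hx | hx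
    · simp [hx]
    · rw [mul_div_mul_left _ _ hx, mul_assoc]
  calc relEnt (X *ᵥ a) (X *ᵥ b) ≤ ∑ i, ∑ j, X i j * (a j * Real.log (a j / b j)) := by
        refine sum_le_sum fun i _ => ?_
        simp only [← hrow]
        exact sum_mul_log_div_sum_le_sum_mul_log_div (fun j => mul_nonneg (hX.1 i j) (ha j))
          (fun j => mul_nonneg (hX.1 i j) (hb j))
          (fun j hj => (mul_eq_zero.mp hj).elim (fun h => by simp [h]) fun h => by simp [hab j h])
    _ = relEnt a b := by
        rw [sum_comm]
        simp [relEnt, ← sum_mul, hX.2]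

theorem Matrix.apply_mul_apply_le_mul_apply {A B : Matrix ι ι ℝ} (hA : ∀ i j, 0 ≤ A i j)
    (hB : ∀ i j, 0 ≤ B i j) (i j k : ι) : A i j * B j k ≤ (A * B) i k := by
  rw [Matrix.mul_apply]
  exact single_le_sum (fun l _ => mul_nonneg (hA i l) (hB l k)) (mem_univ j)

theorem Matrix.mul_apply_nonneg {A B : Matrix ι ι ℝ} (hA : ∀ i j, 0 ≤ A i j)
    (hB : ∀ i j, 0 ≤ B i j) (i k : ι) : 0 ≤ (A * B) i k := by
  rw [Matrix.mul_apply]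
  exact sum_nonneg fun j _ => mul_nonneg (hA i j) (hB j k)

theorem wEnt_mul_sub_wEnt {W Z : Matrix ι ι ℝ} (hW : ∀ i j, 0 ≤ W i j)
    (hZ : ∀ i j, 0 ≤ Z i j) {p : ι → ℝ} (hZp : Z *ᵥ p = p) :
    wEnt p (W * Z) - wEnt p W =
      ∑ j, ∑ k, Z j k * p k * relEnt (fun i => W i j) (fun i => (W * Z) i k) := by
  have hsplit : ∀ i j k, Z j k * p k * (W i j * Real.log (W i j / (W * Z) i k)) =
      p k * (W i j * Z j k) * Real.log (W i j) -
        p k * (W i j * Z j k) * Real.log ((W * Z) i k) := by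
    intro i j k
    rcases (mul_nonneg (hW i j) (hZ j k)).eq_or_lt with h0 | hpos
    · rcases mul_eq_zero.mp h0.symm with h | h <;> simp [h]
    have hWZ := hpos.trans_le (Matrix.apply_mul_apply_le_mul_apply hW hZ i j k)
    rw [Real.log_div (left_ne_zero_of_mul hpos.ne') hWZ.ne']
    ring
  have hW_term : ∑ j, ∑ k, ∑ i, p k * (W i j * Z j k) * Real.log (W i j) = -wEnt p W :=
    calc _ = ∑ j, (Z *ᵥ p) j * ∑ i, W i j * Real.log (W i j) := by
          refine sum_congr rfl fun j _ => ?_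
          rw [Matrix.mulVec, dotProduct, sum_mul]
          refine sum_congr rfl fun k _ => ?_
          rw [mul_sum]
          exact sum_congr rfl fun i _ => by ring
      _ = -wEnt p W := by simp [hZp, wEnt, shEnt]
  have hWZ_term : ∑ j, ∑ k, ∑ i, p k * (W i j * Z j k) * Real.log ((W * Z) i k) =
      -wEnt p (W * Z) :=
    calc _ = ∑ k, p k * ∑ i, (W * Z) i k * Real.log ((W * Z) i k) := by
          rw [sum_comm]
          refine sum_congr rfl fun k _ => ?_
          rw [sum_comm]
          simp only [Matrix.mul_apply, mul_sum, sum_mul]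
          exact sum_congr rfl fun i _ => sum_congr rfl fun j _ => by ring
      _ = -wEnt p (W * Z) := by simp [wEnt, shEnt]
  simp only [relEnt, mul_sum, hsplit, sum_sub_distrib, hW_term, hWZ_term]
  ring

end

theorem wEnt_strong_subadd_general {N : ℕ} (X Y Z : Matrix (Fin N) (Fin N) ℝ)
    (hX : IsColStochastic X) (hY : IsColStochastic Y) (hZ : IsColStochastic Z)
    (p : Fin N → ℝ) (hp : IsProbVec p)
    (hZp : Z.mulVec p = p) :
    wEnt p (X * Y * Z) + wEnt p Y ≤ wEnt p (X * Y) + wEnt p (Y * Z) := by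
  suffices ∑ j, ∑ k, Z j k * p k * relEnt (fun i => (X * Y) i j) (fun i => (X * Y * Z) i k) ≤
      ∑ j, ∑ k, Z j k * p k * relEnt (fun i => Y i j) (fun i => (Y * Z) i k) by
    linarith [wEnt_mul_sub_wEnt hY.1 hZ.1 hZp,
      wEnt_mul_sub_wEnt (Matrix.mul_apply_nonneg hX.1 hY.1) hZ.1 hZp]
  refine sum_le_sum fun j _ => sum_le_sum fun k _ => ?_
  rcases (hZ.1 j k).eq_or_lt with hZjk | hZjk
  · simp [← hZjk]
  refine mul_le_mul_of_nonneg_left ?_ (mul_nonneg hZjk.le (hp.1 k))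
  rw [Matrix.mul_assoc]
  refine relEnt_mulVec_le_s17 hX (fun i => hY.1 i j) (fun i => Matrix.mul_apply_nonneg hY.1 hZ.1 i k)
    fun i hi => ?_
  have hle := hi ▸ Matrix.apply_mul_apply_le_mul_apply hY.1 hZ.1 i j k
  exact (mul_eq_zero.mp (hle.antisymm (mul_nonneg (hY.1 i j) hZjk.le))).resolve_right hZjk.ne'

/-- Strong subadditivity of the weighted entropy at a common invariant
probability vector: if `Xp = Yp = Zp = p` then
`H_p(XYZ) + H_p(Y) ≤ H_p(XY) + H_p(YZ)`. -/
theorem wEnt_strong_subadd {N : ℕ} (X Y Z : Matrix (Fin N) (Fin N) ℝ)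
    (hX : IsColStochastic X) (hY : IsColStochastic Y) (hZ : IsColStochastic Z)
    (p : Fin N → ℝ) (hp : IsProbVec p)
    (hXp : X.mulVec p = p) (hYp : Y.mulVec p = p) (hZp : Z.mulVec p = p) :
    wEnt p (X * Y * Z) + wEnt p Y ≤ wEnt p (X * Y) + wEnt p (Y * Z) :=
  wEnt_strong_subadd_general X Y Z hX hY hZ p hp hZp
end
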